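/- Let V be a Gödel set in which 0 is isolated (V ∩ (0,ε) = ∅ for some ε > 0). Then for every sentence A there exists a prenex sentence P such that ¬¬(A ↔ P) is valid in G_V; in particular every sentence admits a prenex normal form whose equivalence with it is >0-valid. -/

import Mathlib

namespace GodelPaper

/-- A first-order language: function and relation symbols of each arity. -/
structure Lang where
  Func : ℕ → Type
  Rel : ℕ → Type

/-- A Gödel set: a closed subset of [0,1] containing 0 and 1. -/
def GodelSet (V : Set ℝ) : Prop :=
  IsClosed V ∧ V ⊆ Set.Icc 0 1 ∧ (0:ℝ) ∈ V ∧ (1:ℝ) ∈ V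

/-- Terms with variables from `α`. -/
inductive Term (L : Lang) (α : Type) : Type
  | var : α → Term L α
  | func : ∀ {k}, L.Func k → (Fin k → Term L α) → Term L α

/-- A `V`-interpretation: nonempty domain, interpretation of function symbols,
and truth values in `V` for atomic sentences with parameters. -/
structure Interp (L : Lang) (V : Set ℝ) where
  Dom : Type
  dom_nonempty : Nonempty Dom
  funMap : ∀ {k}, L.Func k → (Fin k → Dom) → Dom
  relVal : ∀ {k}, L.Rel k → (Fin k → Dom) → ℝ
  relVal_mem : ∀ {k} (R : L.Rel k) (v : Fin k → Dom), relVal R v ∈ V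

def Term.eval {L : Lang} {V : Set ℝ} (I : Interp L V) {α : Type} (v : α → I.Dom) :
    Term L α → I.Dom
  | .var i => v i
  | .func f ts => I.funMap f fun j => Term.eval I v (ts j)

/-- Formulas of the Δ-extended language, with free variables among `Fin n`.
The quantifiers bind the *last* variable. Δ-free formulas (i.e. formulas of the
plain language) are singled out by the predicate `DeltaFree` below. -/
inductive Form (L : Lang) : ℕ → Type
  | falsum : ∀ {n}, Form L n
  | atom : ∀ {n k}, L.Rel k → (Fin k → Term L (Fin n)) → Form L n
  | conj : ∀ {n}, Form L n → Form L n → Form L n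
  | disj : ∀ {n}, Form L n → Form L n → Form L n
  | impl : ∀ {n}, Form L n → Form L n → Form L n
  | delta : ∀ {n}, Form L n → Form L n
  | all : ∀ {n}, Form L (n+1) → Form L n
  | ex : ∀ {n}, Form L (n+1) → Form L n

/-- The Gödel truth value of a formula under an interpretation and an
assignment of the free variables. -/
noncomputable def Form.val {L : Lang} {V : Set ℝ} (I : Interp L V) :
    ∀ {n}, Form L n → (Fin n → I.Dom) → ℝ
  | _, .falsum, _ => 0
  | _, .atom R ts, ρ => I.relVal R fun j => Term.eval I ρ (ts j)
  | _, .conj A B, ρ => min (Form.val I A ρ) (Form.val I B ρ)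
  | _, .disj A B, ρ => max (Form.val I A ρ) (Form.val I B ρ)
  | _, .impl A B, ρ => if Form.val I A ρ ≤ Form.val I B ρ then 1 else Form.val I B ρ
  | _, .delta A, ρ => if Form.val I A ρ = 1 then 1 else 0
  | _, .all A, ρ => sInf {v : ℝ | ∃ d : I.Dom, v = Form.val I A (Fin.snoc ρ d)}
  | _, .ex A, ρ => sSup {v : ℝ | ∃ d : I.Dom, v = Form.val I A (Fin.snoc ρ d)}

/-- The value of a sentence. -/
noncomputable def Form.sval {L : Lang} {V : Set ℝ} (I : Interp L V) (A : Form L 0) : ℝ :=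
  Form.val I A Fin.elim0

/-- `A` is valid in `G_V`. -/
def Valid {L : Lang} (V : Set ℝ) (A : Form L 0) : Prop :=
  ∀ I : Interp L V, Form.sval I A = 1

/-- `A` is 1-satisfiable in `G_V`. -/
def OneSat {L : Lang} (V : Set ℝ) (A : Form L 0) : Prop :=
  ∃ I : Interp L V, Form.sval I A = 1

/-- `A` is classically satisfiable: it takes value 1 under a `V`-interpretation
assigning only values in {0,1} to atomic sentences. -/
def ClassSat {L : Lang} (V : Set ℝ) (A : Form L 0) : Prop :=
  ∃ I : Interp L V,
    (∀ {k : ℕ} (R : L.Rel k) (v : Fin k → I.Dom), I.relVal R v = 0 ∨ I.relVal R v = 1) ∧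
    Form.sval I A = 1

/-- ¬A abbreviates A ⊃ ⊥. -/
def Form.not {L : Lang} {n : ℕ} (A : Form L n) : Form L n := Form.impl A Form.falsum

/-- A ↔ B abbreviates (A ⊃ B) ∧ (B ⊃ A). -/
def Form.iff {L : Lang} {n : ℕ} (A B : Form L n) : Form L n :=
  Form.conj (Form.impl A B) (Form.impl B A)

/-- Formulas of the plain language (no Δ). -/
def DeltaFree {L : Lang} : ∀ {n}, Form L n → Prop
  | _, .falsum => True
  | _, .atom _ _ => True
  | _, .conj A B => DeltaFree A ∧ DeltaFree B
  | _, .disj A B => DeltaFree A ∧ DeltaFree B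
  | _, .impl A B => DeltaFree A ∧ DeltaFree B
  | _, .delta _ => False
  | _, .all A => DeltaFree A
  | _, .ex A => DeltaFree A

/-- Quantifier-free formulas. -/
def QuantFree {L : Lang} : ∀ {n}, Form L n → Prop
  | _, .falsum => True
  | _, .atom _ _ => True
  | _, .conj A B => QuantFree A ∧ QuantFree B
  | _, .disj A B => QuantFree A ∧ QuantFree B
  | _, .impl A B => QuantFree A ∧ QuantFree B
  | _, .delta A => QuantFree A
  | _, .all _ => False
  | _, .ex _ => False

/-- Formulas containing no universal quantifier. -/
def AllFree {L : Lang} : ∀ {n}, Form L n → Prop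
  | _, .falsum => True
  | _, .atom _ _ => True
  | _, .conj A B => AllFree A ∧ AllFree B
  | _, .disj A B => AllFree A ∧ AllFree B
  | _, .impl A B => AllFree A ∧ AllFree B
  | _, .delta A => AllFree A
  | _, .all _ => False
  | _, .ex A => AllFree A

/-- Prenex formulas: a block of quantifiers followed by a quantifier-free matrix. -/
inductive IsPrenex {L : Lang} : ∀ {n}, Form L n → Prop
  | qf {n} {A : Form L n} : QuantFree A → IsPrenex A
  | all {n} {A : Form L (n+1)} : IsPrenex A → IsPrenex (Form.all A)
  | ex {n} {A : Form L (n+1)} : IsPrenex A → IsPrenex (Form.ex A)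

/-- Purely existential prenex formulas. -/
inductive ExPrenex {L : Lang} : ∀ {n}, Form L n → Prop
  | qf {n} {A : Form L n} : QuantFree A → ExPrenex A
  | ex {n} {A : Form L (n+1)} : ExPrenex A → ExPrenex (Form.ex A)

/-- The glued interpretation `I_ω`: atoms with value ≤ ω keep their value,
all other atoms get value 1. Same domain and function interpretations. -/
noncomputable def Interp.glue {L : Lang} {V : Set ℝ} (I : Interp L V) (ω : ℝ)
    (h1 : (1:ℝ) ∈ V) : Interp L V where
  Dom := I.Dom
  dom_nonempty := I.dom_nonempty
  funMap := fun {k} f v => I.funMap f v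
  relVal := fun {k} R v => if I.relVal R v ≤ ω then I.relVal R v else 1
  relVal_mem := fun {k} R v => by
    by_cases h : I.relVal R v ≤ ω
    · simpa [h] using I.relVal_mem R v
    · simpa [h] using h1

/-- The Gödel set `V_↑ = {1 - 1/k : k ≥ 1} ∪ {1}`. -/
def Vup : Set ℝ := {x : ℝ | ∃ k : ℕ, 1 ≤ k ∧ x = 1 - 1/(k:ℝ)} ∪ {1}

/-- The `m`-element Gödel set `V_m = {1 - 1/k : 1 ≤ k ≤ m-1} ∪ {1}`. -/
def Vfin (m : ℕ) : Set ℝ :=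
  {x : ℝ | ∃ k : ℕ, 1 ≤ k ∧ k ≤ m - 1 ∧ x = 1 - 1/(k:ℝ)} ∪ {1}

/-- Atomic formula built from a unary predicate. -/
def atom1 {L : Lang} (P : L.Rel 1) {n : ℕ} (t : Term L (Fin n)) : Form L n :=
  Form.atom P fun _ => t

/-- Atomic formula built from a 0-ary predicate (propositional atom). -/
def atom0 {L : Lang} (X : L.Rel 0) {n : ℕ} : Form L n :=
  Form.atom X fun i => i.elim0

def Term.rename {L : Lang} {α β : Type} (f : α → β) : Term L α → Term L β
  | .var i => .var (f i)
  | .func g ts => .func g fun j => Term.rename f (ts j)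

def Form.rename {L : Lang} : ∀ {m n}, (Fin m → Fin n) → Form L m → Form L n
  | _, _, _, .falsum => .falsum
  | _, _, f, .atom R ts => .atom R fun j => (ts j).rename f
  | _, _, f, .conj A B => .conj (A.rename f) (B.rename f)
  | _, _, f, .disj A B => .disj (A.rename f) (B.rename f)
  | _, _, f, .impl A B => .impl (A.rename f) (B.rename f)
  | _, _, f, .delta A => .delta (A.rename f)
  | _, _, f, .all A =>
      .all (A.rename (Fin.lastCases (Fin.last _) fun i => Fin.castSucc (f i)))
  | _, _, f, .ex A =>
      .ex (A.rename (Fin.lastCases (Fin.last _) fun i => Fin.castSucc (f i)))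

/-- Weakening: regard a formula with `n` free variables as one with `n+1`
free variables (not using the new last variable). -/
def Form.lift {L : Lang} {n : ℕ} (A : Form L n) : Form L (n+1) :=
  A.rename Fin.castSucc

def Term.subst {L : Lang} {α β : Type} (σ : α → Term L β) : Term L α → Term L β
  | .var i => σ i
  | .func g ts => .func g fun j => Term.subst σ (ts j)

def Form.subst {L : Lang} : ∀ {m n}, (Fin m → Term L (Fin n)) → Form L m → Form L n
  | _, _, _, .falsum => .falsum
  | _, _, σ, .atom R ts => .atom R fun j => (ts j).subst σ
  | _, _, σ, .conj A B => .conj (A.subst σ) (B.subst σ)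
  | _, _, σ, .disj A B => .disj (A.subst σ) (B.subst σ)
  | _, _, σ, .impl A B => .impl (A.subst σ) (B.subst σ)
  | _, _, σ, .delta A => .delta (A.subst σ)
  | _, _, σ, .all A =>
      .all (A.subst (Fin.lastCases (.var (Fin.last _))
        fun i => (σ i).rename Fin.castSucc))
  | _, _, σ, .ex A =>
      .ex (A.subst (Fin.lastCases (.var (Fin.last _))
        fun i => (σ i).rename Fin.castSucc))

/-- The language `L ∪ {f}` with one new function symbol of arity `a`. -/
def Lang.addFunc (L : Lang) (a : ℕ) : Lang where
  Func := fun k => L.Func k ⊕ PLift (k = a)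
  Rel := L.Rel

/-- The new function symbol of `L.addFunc a`. -/
def newFunc (L : Lang) (a : ℕ) : (L.addFunc a).Func a := Sum.inr ⟨rfl⟩

def Term.emb {L : Lang} {a : ℕ} {α : Type} : Term L α → Term (L.addFunc a) α
  | .var i => .var i
  | .func g ts => .func (Sum.inl g) fun j => Term.emb (ts j)

/-- Embedding of `L`-formulas into the language with the extra function symbol. -/
def Form.emb {L : Lang} {a : ℕ} : ∀ {n}, Form L n → Form (L.addFunc a) n
  | _, .falsum => .falsum
  | _, .atom R ts => .atom R fun j => (ts j).emb
  | _, .conj A B => .conj A.emb B.emb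
  | _, .disj A B => .disj A.emb B.emb
  | _, .impl A B => .impl A.emb B.emb
  | _, .delta A => .delta A.emb
  | _, .all A => .all A.emb
  | _, .ex A => .ex A.emb

/-- Prefix of `n` existential quantifiers (outermost quantifier binds variable 0). -/
def Form.exN {L : Lang} : ∀ n, Form L n → Form L 0
  | 0, A => A
  | n+1, A => Form.exN n (Form.ex A)

/-- Prefix of `n` universal quantifiers (outermost quantifier binds variable 0). -/
def Form.allN {L : Lang} : ∀ n, Form L n → Form L 0
  | 0, A => A
  | n+1, A => Form.allN n (Form.all A)

/-!
If 0 is isolated in `V`, a Δ-free formula has positive value exactly when it is classically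
true in the crisp reading of the same interpretation, where an atom is true iff its value is
positive: the isolation gap is what keeps an infimum of positive values away from 0. Since
`¬¬X` has value 1 exactly when `X` has positive value, `¬¬(A ↔ P)` is valid as soon as `A` and
`P` are classically equivalent, and a classical prenex normal form `P` of `A` does the job.
-/

theorem imp_exists_iff_exists_imp {α : Sort*} [Nonempty α] {p : Prop} {q : α → Prop} :
    (p → ∃ x, q x) ↔ ∃ x, p → q x := by
  by_cases hp : p <;> simp [hp]

theorem godelImp_pos_iff {a b : ℝ} (hb : 0 ≤ b) :
    0 < (if a ≤ b then (1 : ℝ) else b) ↔ (0 < a → 0 < b) := by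
  split_ifs with hab
  · exact iff_of_true one_pos fun ha => ha.trans_le hab
  · exact ⟨fun h _ => h, fun h => h (hb.trans_lt (not_le.mp hab))⟩

theorem ciInf_mem_of_isClosed {α ι : Type*} [ConditionallyCompleteLinearOrder α]
    [TopologicalSpace α] [OrderTopology α] [Nonempty ι] {s : Set α} (hs : IsClosed s)
    {f : ι → α} (hf : ∀ i, f i ∈ s) (hbdd : BddBelow (Set.range f)) : ⨅ i, f i ∈ s :=
  hs.closure_subset_iff.mpr (Set.range_subset_iff.mpr hf)
    (csInf_mem_closure (Set.range_nonempty f) hbdd)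

theorem ciSup_mem_of_isClosed {α ι : Type*} [ConditionallyCompleteLinearOrder α]
    [TopologicalSpace α] [OrderTopology α] [Nonempty ι] {s : Set α} (hs : IsClosed s)
    {f : ι → α} (hf : ∀ i, f i ∈ s) (hbdd : BddAbove (Set.range f)) : ⨆ i, f i ∈ s :=
  hs.closure_subset_iff.mpr (Set.range_subset_iff.mpr hf)
    (csSup_mem_closure (Set.range_nonempty f) hbdd)

theorem ciInf_pos_iff_of_isolated {ι : Type*} [Nonempty ι] {V : Set ℝ} {ε : ℝ} (hε : 0 < ε)
    (hiso : V ∩ Set.Ioo 0 ε = ∅) {f : ι → ℝ} (hfV : ∀ i, f i ∈ V)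
    (hbdd : BddBelow (Set.range f)) :
    0 < ⨅ i, f i ↔ ∀ i, 0 < f i := by
  refine ⟨fun h i => h.trans_le (ciInf_le hbdd i), fun h => hε.trans_le (le_ciInf fun i => ?_)⟩
  by_contra hlt
  exact Set.eq_empty_iff_forall_notMem.mp hiso (f i) ⟨hfV i, h i, not_le.mp hlt⟩

theorem Fin.snoc_comp_lastCases {m n : ℕ} {α : Type*} (f : Fin m → Fin n) (ρ : Fin n → α)
    (d : α) :
    (Fin.snoc ρ d : Fin (n + 1) → α) ∘ Fin.lastCases (Fin.last n) (fun i => (f i).castSucc) =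
      Fin.snoc (ρ ∘ f) d := by
  funext i
  induction i using Fin.lastCases <;> simp

section Semantics

variable {L : Lang} {V : Set ℝ}

theorem Form.val_all (I : Interp L V) {n : ℕ} (A : Form L (n + 1)) (ρ : Fin n → I.Dom) :
    Form.val I (.all A) ρ = ⨅ d, Form.val I A (Fin.snoc ρ d) := by
  simp only [Form.val, iInf, Set.range, eq_comm]

theorem Form.val_ex (I : Interp L V) {n : ℕ} (A : Form L (n + 1)) (ρ : Fin n → I.Dom) :
    Form.val I (.ex A) ρ = ⨆ d, Form.val I A (Fin.snoc ρ d) := by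
  simp only [Form.val, iSup, Set.range, eq_comm]

theorem Form.val_mem (hV : GodelSet V) (I : Interp L V) {n : ℕ} (A : Form L n)
    (ρ : Fin n → I.Dom) : Form.val I A ρ ∈ V := by
  obtain ⟨hcl, hsub, h0, h1⟩ := hV
  have := I.dom_nonempty
  induction A with
  | falsum => exact h0
  | atom R ts => exact I.relVal_mem _ _
  | conj A B ihA ihB =>
    rcases min_choice (Form.val I A ρ) (Form.val I B ρ) with h | h <;>
      simp only [Form.val, h, ihA, ihB]
  | disj A B ihA ihB =>
    rcases max_choice (Form.val I A ρ) (Form.val I B ρ) with h | h <;>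
      simp only [Form.val, h, ihA, ihB]
  | impl A B ihA ihB =>
    simp only [Form.val]
    split_ifs
    exacts [h1, ihB ρ]
  | delta A =>
    simp only [Form.val]
    split_ifs
    exacts [h1, h0]
  | all A ih =>
    rw [Form.val_all]
    exact ciInf_mem_of_isClosed hcl (fun d => ih _)
      ⟨0, Set.forall_mem_range.mpr fun d => (hsub (ih _)).1⟩
  | ex A ih =>
    rw [Form.val_ex]
    exact ciSup_mem_of_isClosed hcl (fun d => ih _)
      ⟨1, Set.forall_mem_range.mpr fun d => (hsub (ih _)).2⟩

theorem Form.val_nonneg (hV : GodelSet V) (I : Interp L V) {n : ℕ} (A : Form L n)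
    (ρ : Fin n → I.Dom) : 0 ≤ Form.val I A ρ :=
  (hV.2.1 (Form.val_mem hV I A ρ)).1

theorem Form.val_le_one (hV : GodelSet V) (I : Interp L V) {n : ℕ} (A : Form L n)
    (ρ : Fin n → I.Dom) : Form.val I A ρ ≤ 1 :=
  (hV.2.1 (Form.val_mem hV I A ρ)).2

theorem Form.val_not_not_eq_one_iff (I : Interp L V) {n : ℕ} (A : Form L n)
    (ρ : Fin n → I.Dom) : Form.val I A.not.not ρ = 1 ↔ 0 < Form.val I A ρ := by
  simp only [Form.not, Form.val]
  by_cases h : Form.val I A ρ ≤ 0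
  · simp [h]
  · simpa [h] using not_le.mp h

def Form.Holds (I : Interp L V) : ∀ {n}, Form L n → (Fin n → I.Dom) → Prop
  | _, .falsum, _ => False
  | _, .atom R ts, ρ => 0 < I.relVal R fun j => Term.eval I ρ (ts j)
  | _, .conj A B, ρ => Form.Holds I A ρ ∧ Form.Holds I B ρ
  | _, .disj A B, ρ => Form.Holds I A ρ ∨ Form.Holds I B ρ
  | _, .impl A B, ρ => Form.Holds I A ρ → Form.Holds I B ρ
  | _, .delta A, ρ => Form.Holds I A ρ -- `Δ` is the identity on crisp values
  | _, .all A, ρ => ∀ d, Form.Holds I A (Fin.snoc ρ d)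
  | _, .ex A, ρ => ∃ d, Form.Holds I A (Fin.snoc ρ d)

theorem Form.val_pos_iff_holds (hV : GodelSet V) {ε : ℝ} (hε : 0 < ε)
    (hiso : V ∩ Set.Ioo 0 ε = ∅) (I : Interp L V) {n : ℕ} {A : Form L n} (hA : DeltaFree A)
    (ρ : Fin n → I.Dom) : 0 < Form.val I A ρ ↔ Form.Holds I A ρ := by
  have := I.dom_nonempty
  induction A with
  | falsum => simp [Form.val, Form.Holds]
  | atom R ts => rfl
  | conj A B ihA ihB => simp only [Form.val, Form.Holds, lt_min_iff, ihA hA.1, ihB hA.2]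
  | disj A B ihA ihB => simp only [Form.val, Form.Holds, lt_max_iff, ihA hA.1, ihB hA.2]
  | impl A B ihA ihB =>
    simp only [Form.val, Form.Holds, godelImp_pos_iff (Form.val_nonneg hV I B ρ), ihA hA.1,
      ihB hA.2]
  | delta A => exact hA.elim
  | all A ih =>
    rw [Form.val_all, ciInf_pos_iff_of_isolated hε hiso (fun d => Form.val_mem hV I A _)
      ⟨0, Set.forall_mem_range.mpr fun d => Form.val_nonneg hV I A _⟩, Form.Holds]
    exact forall_congr' fun d => ih hA _
  | ex A ih =>
    rw [Form.val_ex, lt_ciSup_iff ⟨1, Set.forall_mem_range.mpr fun d => Form.val_le_one hV I A _⟩,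
      Form.Holds]
    exact exists_congr fun d => ih hA _

theorem Term.eval_rename (I : Interp L V) {α β : Type} (f : α → β) (ρ : β → I.Dom)
    (t : Term L α) : Term.eval I ρ (t.rename f) = Term.eval I (ρ ∘ f) t := by
  induction t with
  | var i => rfl
  | func g ts ih => simp only [Term.rename, Term.eval, ih]

theorem Form.holds_rename (I : Interp L V) {m n : ℕ} (f : Fin m → Fin n) (A : Form L m)
    (ρ : Fin n → I.Dom) : Form.Holds I (A.rename f) ρ ↔ Form.Holds I A (ρ ∘ f) := by
  induction A generalizing n with
  | falsum => rfl
  | atom R ts => simp only [Form.rename, Form.Holds, Term.eval_rename]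
  | conj A B ihA ihB => simp only [Form.rename, Form.Holds, ihA, ihB]
  | disj A B ihA ihB => simp only [Form.rename, Form.Holds, ihA, ihB]
  | impl A B ihA ihB => simp only [Form.rename, Form.Holds, ihA, ihB]
  | delta A ih => simp only [Form.rename, Form.Holds, ih]
  | all A ih => simp only [Form.rename, Form.Holds, ih, Fin.snoc_comp_lastCases]
  | ex A ih => simp only [Form.rename, Form.Holds, ih, Fin.snoc_comp_lastCases]

theorem Form.holds_lift (I : Interp L V) {n : ℕ} (A : Form L n) (ρ : Fin n → I.Dom)
    (d : I.Dom) : Form.Holds I A.lift (Fin.snoc ρ d) ↔ Form.Holds I A ρ := by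
  rw [Form.lift, Form.holds_rename, Fin.snoc_comp_castSucc]

end Semantics

section PrenexForm

variable {L : Lang}

theorem QuantFree.rename {m n : ℕ} {A : Form L m} (hA : QuantFree A) (f : Fin m → Fin n) :
    QuantFree (A.rename f) := by
  induction A generalizing n with
  | falsum | atom => trivial
  | conj A B ihA ihB | disj A B ihA ihB | impl A B ihA ihB => exact ⟨ihA hA.1 f, ihB hA.2 f⟩
  | delta A ih => exact ih hA f
  | all | ex => exact hA.elim

theorem DeltaFree.rename {m n : ℕ} {A : Form L m} (hA : DeltaFree A) (f : Fin m → Fin n) :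
    DeltaFree (A.rename f) := by
  induction A generalizing n with
  | falsum | atom => trivial
  | conj A B ihA ihB | disj A B ihA ihB | impl A B ihA ihB => exact ⟨ihA hA.1 f, ihB hA.2 f⟩
  | delta => exact hA.elim
  | all A ih | ex A ih => exact ih hA _

theorem IsPrenex.rename {m n : ℕ} {A : Form L m} (hA : IsPrenex A) (f : Fin m → Fin n) :
    IsPrenex (A.rename f) := by
  induction hA generalizing n with
  | qf hA => exact .qf (hA.rename f)
  | all _ ih => exact .all (ih _)
  | ex _ ih => exact .ex (ih _)

def HasPrenexForm {n : ℕ} (A : Form L n) : Prop :=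
  ∃ P : Form L n, IsPrenex P ∧ DeltaFree P ∧
    ∀ {V : Set ℝ} (I : Interp L V) (ρ : Fin n → I.Dom), Form.Holds I P ρ ↔ Form.Holds I A ρ

theorem HasPrenexForm.of_isPrenex {n : ℕ} {A : Form L n} (hA : IsPrenex A) (hAΔ : DeltaFree A) :
    HasPrenexForm A :=
  ⟨A, hA, hAΔ, fun _ _ => Iff.rfl⟩

theorem HasPrenexForm.congr {n : ℕ} {A B : Form L n} (hA : HasPrenexForm A)
    (hAB : ∀ {V : Set ℝ} (I : Interp L V) (ρ : Fin n → I.Dom),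
      Form.Holds I A ρ ↔ Form.Holds I B ρ) :
    HasPrenexForm B :=
  let ⟨P, hP, hPΔ, hPA⟩ := hA
  ⟨P, hP, hPΔ, fun I ρ => (hPA I ρ).trans (hAB I ρ)⟩

theorem HasPrenexForm.all {n : ℕ} {A : Form L (n + 1)} (hA : HasPrenexForm A) :
    HasPrenexForm A.all :=
  let ⟨P, hP, hPΔ, hPA⟩ := hA
  ⟨P.all, hP.all, hPΔ, fun I _ => forall_congr' fun _ => hPA I _⟩

theorem HasPrenexForm.ex {n : ℕ} {A : Form L (n + 1)} (hA : HasPrenexForm A) :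
    HasPrenexForm A.ex :=
  let ⟨P, hP, hPΔ, hPA⟩ := hA
  ⟨P.ex, hP.ex, hPΔ, fun I _ => exists_congr fun _ => hPA I _⟩

theorem HasPrenexForm.impl_of_quantFree {n : ℕ} {A B : Form L n} (hA : QuantFree A)
    (hAΔ : DeltaFree A) (hB : IsPrenex B) (hBΔ : DeltaFree B) : HasPrenexForm (A.impl B) := by
  induction hB with
  | qf hB => exact .of_isPrenex (.qf ⟨hA, hB⟩) ⟨hAΔ, hBΔ⟩
  | all _ ih =>
    refine (ih (A := A.lift) (hA.rename _) (hAΔ.rename _) hBΔ).all.congr fun I ρ => ?_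
    simp only [Form.Holds, Form.holds_lift, imp_forall_iff]
  | ex _ ih =>
    refine (ih (A := A.lift) (hA.rename _) (hAΔ.rename _) hBΔ).ex.congr fun I ρ => ?_
    have := I.dom_nonempty
    simp only [Form.Holds, Form.holds_lift, imp_exists_iff_exists_imp]

theorem HasPrenexForm.impl_of_isPrenex {n : ℕ} {A B : Form L n} (hA : IsPrenex A)
    (hAΔ : DeltaFree A) (hB : IsPrenex B) (hBΔ : DeltaFree B) : HasPrenexForm (A.impl B) := by
  induction hA with
  | qf hA => exact .impl_of_quantFree hA hAΔ hB hBΔ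
  | all _ ih =>
    refine (ih (B := B.lift) hAΔ (hB.rename _) (hBΔ.rename _)).ex.congr fun I ρ => ?_
    have := I.dom_nonempty
    simp only [Form.Holds, Form.holds_lift, forall_imp_iff_exists_imp]
  | ex _ ih =>
    refine (ih (B := B.lift) hAΔ (hB.rename _) (hBΔ.rename _)).all.congr fun I ρ => ?_
    simp only [Form.Holds, Form.holds_lift, exists_imp]

theorem HasPrenexForm.impl {n : ℕ} {A B : Form L n} (hA : HasPrenexForm A)
    (hB : HasPrenexForm B) : HasPrenexForm (A.impl B) :=
  let ⟨_, hP, hPΔ, hPA⟩ := hA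
  let ⟨_, hQ, hQΔ, hQB⟩ := hB
  (impl_of_isPrenex hP hPΔ hQ hQΔ).congr fun I ρ => imp_congr (hPA I ρ) (hQB I ρ)

theorem HasPrenexForm.falsum {n : ℕ} : HasPrenexForm (Form.falsum : Form L n) :=
  .of_isPrenex (.qf trivial) trivial

theorem hasPrenexForm_of_deltaFree {n : ℕ} {A : Form L n} (hA : DeltaFree A) :
    HasPrenexForm A := by
  induction A with
  | falsum => exact .falsum
  | atom => exact .of_isPrenex (.qf trivial) trivial
  | conj A B ihA ihB =>
    refine ((ihA hA.1).impl ((ihB hA.2).impl .falsum)).impl .falsum |>.congr fun I ρ => ?_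
    simp only [Form.Holds]
    tauto
  | disj A B ihA ihB =>
    refine ((ihA hA.1).impl .falsum).impl (ihB hA.2) |>.congr fun I ρ => ?_
    simp only [Form.Holds]
    tauto
  | impl A B ihA ihB => exact (ihA hA.1).impl (ihB hA.2)
  | delta => exact hA.elim
  | all A ih => exact (ih hA).all
  | ex A ih => exact (ih hA).ex

end PrenexForm

/-- If 0 is isolated in the Gödel set `V`, then every sentence
`A` has a prenex sentence `P` such that `¬¬(A ↔ P)` is valid in `G_V`
(a prenex normal form whose equivalence with `A` is >0-valid). -/
theorem stmt_8 {L : Lang} {V : Set ℝ} (hV : GodelSet V)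
    (h0 : ∃ ε > (0:ℝ), V ∩ Set.Ioo 0 ε = ∅) (A : Form L 0) (hA : DeltaFree A) :
    ∃ P : Form L 0, IsPrenex P ∧ DeltaFree P ∧
      Valid V (Form.not (Form.not (Form.iff A P))) := by
  obtain ⟨ε, hε, hiso⟩ := h0
  obtain ⟨P, hP, hPΔ, hPA⟩ := hasPrenexForm_of_deltaFree hA
  refine ⟨P, hP, hPΔ, fun I => ?_⟩
  have hiffΔ : DeltaFree (A.iff P) := ⟨⟨hA, hPΔ⟩, hPΔ, hA⟩
  rw [Form.sval, Form.val_not_not_eq_one_iff, Form.val_pos_iff_holds hV hε hiso I hiffΔ]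
  simp only [Form.iff, Form.Holds, hPA I]
  exact ⟨id, id⟩

end GodelPaper
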